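/- Define the map μ on (ℚ(y₁,…,y₅))⁵ by μ(y₁,y₂,y₃,y₄,y₅) = (y₂(y₁+1), y₁²y₃/(y₁+1)², y₁²y₄/(y₁+1)², y₅(y₁+1), 1/y₁). Then μ is the cluster transformation of applying mutation μ₁ followed by the cyclic permutation (5 4 3 2 1) to the Y-seed (B, (y₁,…,y₅)) where B is the 5×5 skew-symmetric matrix with rows (0,-1,2,2,-1), (1,0,-3,0,2), (-2,3,0,-3,2), (-2,0,3,0,-1), (1,-2,-2,1,0); moreover σ(μ₁(B)) = B, i.e., this is a mutation loop of length 1. -/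

import Mathlib

open Matrix

/-- Matrix mutation of an exchange matrix at index `k`. -/
def matMutation {n : ℕ} (B : Matrix (Fin n) (Fin n) ℤ) (k : Fin n) :
    Matrix (Fin n) (Fin n) ℤ := fun i j =>
  if i = k ∨ j = k then -B i j
  else if 0 < B i k ∧ 0 < B k j then B i j + B i k * B k j
  else if B i k < 0 ∧ B k j < 0 then B i j - B i k * B k j
  else B i j

/-- Y-seed mutation of the `Y`-variables at index `k`. -/
noncomputable def Ymut {n : ℕ} {K : Type*} [Field K]
    (B : Matrix (Fin n) (Fin n) ℤ) (Y : Fin n → K) (k : Fin n) : Fin n → K :=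
  fun i =>
    if i = k then (Y k)⁻¹
    else if 0 ≤ B k i then Y i * ((Y k)⁻¹ + 1) ^ (-(B k i))
    else Y i * (Y k + 1) ^ (-(B k i))

/-!
The first row of `B` is `(0, -1, 2, 2, -1)`, so mutation at index 1 multiplies `y₂` and `y₅` by
`(y₁ + 1)`, multiplies `y₃` and `y₄` by `(y₁⁻¹ + 1)⁻² = y₁² / (y₁ + 1)²`, and inverts `y₁`;
the cyclic shift `σ(Y)ᵢ = Y_{i+1}` then puts these in the stated order. The loop property of `B`
is a finite check.
-/

theorem inv_add_one_zpow_neg {K : Type*} [Field K] {a : K} (ha : a ≠ 0) (m : ℤ) :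
    (a⁻¹ + 1) ^ (-m) = a ^ m / (a + 1) ^ m := by
  rw [← one_div, div_add_one ha, add_comm 1 a, _root_.zpow_neg, div_zpow, inv_div]

section Ymut

variable {n : ℕ} {K : Type*} [Field K] (B : Matrix (Fin n) (Fin n) ℤ) (Y : Fin n → K)
  {k i : Fin n}

theorem Ymut_self : Ymut B Y k k = (Y k)⁻¹ := by
  simp [Ymut]

theorem Ymut_of_nonneg (hi : i ≠ k) (hB : 0 ≤ B k i) (hY : Y k ≠ 0) :
    Ymut B Y k i = Y i * Y k ^ B k i / (Y k + 1) ^ B k i := by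
  rw [Ymut, if_neg hi, if_pos hB, inv_add_one_zpow_neg hY, mul_div_assoc]

theorem Ymut_of_neg (hi : i ≠ k) (hB : B k i < 0) :
    Ymut B Y k i = Y i * (Y k + 1) ^ (-B k i) := by
  rw [Ymut, if_neg hi, if_neg hB.not_ge]

end Ymut

/-- for the period-1 quiver with the given 5×5 exchange matrix `B`,
mutation at vertex 1 followed by the cyclic permutation `σ = (5 4 3 2 1)`
(acting by `σ(Y)_i = Y_{σ⁻¹(i)}`, i.e. `σ⁻¹(i) = i+1` cyclically) is a mutation
loop of length 1, and its cluster transformation is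
`μ(y) = (y₂(y₁+1), y₁²y₃/(y₁+1)², y₁²y₄/(y₁+1)², y₅(y₁+1), 1/y₁)`. -/
theorem period_one_quiver_mutation_loop :
    let K := FractionRing (MvPolynomial (Fin 5) ℚ)
    let y : Fin 5 → K := fun i => algebraMap (MvPolynomial (Fin 5) ℚ) K (MvPolynomial.X i)
    let B : Matrix (Fin 5) (Fin 5) ℤ :=
      !![0, -1, 2, 2, -1;
         1, 0, -3, 0, 2;
         -2, 3, 0, -3, 2;
         -2, 0, 3, 0, -1;
         1, -2, -2, 1, 0]
    let B' := matMutation B 0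
    let Y' := Ymut B y 0
    -- mutation loop: σ(μ₁(B)) = B
    (∀ i j, B' (i + 1) (j + 1) = B i j) ∧
    -- cluster transformation: σ(Y') = μ(y)
    Y' (0 + 1) = y 1 * (y 0 + 1) ∧
    Y' (1 + 1) = (y 0) ^ 2 * y 2 / (y 0 + 1) ^ 2 ∧
    Y' (2 + 1) = (y 0) ^ 2 * y 3 / (y 0 + 1) ^ 2 ∧
    Y' (3 + 1) = y 4 * (y 0 + 1) ∧
    Y' (4 + 1) = 1 / y 0 := by
  intro K y B B' Y'
  have hy0 : y 0 ≠ 0 :=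
    (map_ne_zero_iff _ (IsFractionRing.injective _ K)).mpr (MvPolynomial.X_ne_zero 0)
  refine ⟨fun i j => by fin_cases i <;> fin_cases j <;> decide, ?_, ?_, ?_, ?_, ?_⟩
  · show Ymut B y 0 1 = _
    rw [Ymut_of_neg B y (by decide) (by decide), show -B 0 1 = 1 from rfl, zpow_one]
  · show Ymut B y 0 2 = _
    rw [Ymut_of_nonneg B y (by decide) (by decide) hy0,
      show B 0 2 = (2 : ℕ) from rfl, zpow_natCast, zpow_natCast, mul_comm (y 2)]
  · show Ymut B y 0 3 = _
    rw [Ymut_of_nonneg B y (by decide) (by decide) hy0,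
      show B 0 3 = (2 : ℕ) from rfl, zpow_natCast, zpow_natCast, mul_comm (y 3)]
  · show Ymut B y 0 4 = _
    rw [Ymut_of_neg B y (by decide) (by decide), show -B 0 4 = 1 from rfl, zpow_one]
  · show Ymut B y 0 0 = _
    rw [Ymut_self, one_div]
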